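/- arXiv:2603.05656 — 7 statements merged into one kernel-verified Lean document; each statement's English description precedes it below -/
import Mathlib

section
/- Let $p_1 \geq p_2 \geq \cdots \geq p_r \geq 0$ be a probability distribution (so $\sum_i p_i = 1$) and let $0 < \alpha < 1$. Then the tail sum $p := \sum_{i=\chi+1}^{r} p_i$ satisfies $p \leq \exp\left(\frac{1-\alpha}{\alpha}\left(S^{(\alpha)} - \log\frac{\chi}{1-\alpha}\right)\right)$, where $S^{(\alpha)} := \frac{1}{1-\alpha}\log\left(\sum_{i=1}^r p_i^{\alpha}\right)$ is the Rényi entropy. -/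
open Finset

/-- Rényi tail bound for `α < 1` (Lemma 1.a): the tail sum of a nonincreasing
probability distribution is bounded using the Rényi entropy of order `α ∈ (0,1)`. -/
theorem renyi_tail_bound_alpha_lt_one (r χ : ℕ) (p : ℕ → ℝ) (α : ℝ)
    (hα0 : 0 < α) (hα1 : α < 1)
    (hnn : ∀ i, i < r → 0 ≤ p i)
    (hmono : ∀ i j, i ≤ j → j < r → p j ≤ p i)
    (hsum : ∑ i ∈ Finset.range r, p i = 1)
    (hχ1 : 1 ≤ χ) (hχr : χ < r) :
    ∑ i ∈ Finset.Ico χ r, p i ≤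
      Real.exp ((1 - α) / α *
        ((1 - α)⁻¹ * Real.log (∑ i ∈ Finset.range r, p i ^ α) -
          Real.log ((χ : ℝ) / (1 - α)))) := by
  set P : ℝ := ∑ i ∈ Finset.Ico χ r, p i with hP
  set S : ℝ := ∑ i ∈ Finset.range r, p i ^ α with hS
  rcases le_or_gt P 0 with hP0 | hP0
  · exact hP0.trans (Real.exp_pos _).le
  -- q := p χ is positive
  set q : ℝ := p χ with hq
  have hq0 : 0 < q := by
    rcases le_or_gt q 0 with h | h
    · exfalso
      have : P ≤ 0 := by
        apply Finset.sum_nonpos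
        intro i hi
        rw [Finset.mem_Ico] at hi
        exact (hmono χ i hi.1 hi.2).trans h
      linarith
    · exact h
  have h1α : (0:ℝ) < 1 - α := by linarith
  have hχpos : (0:ℝ) < (χ : ℝ) := by exact_mod_cast hχ1
  -- head bound : χ * q^α ≤ ∑_{i<χ} p_i^α
  have hhead : (χ : ℝ) * q ^ α ≤ ∑ i ∈ Finset.range χ, p i ^ α := by
    have : ∀ i ∈ Finset.range χ, q ^ α ≤ p i ^ α := by
      intro i hi
      rw [Finset.mem_range] at hi
      exact Real.rpow_le_rpow hq0.le (hmono i χ (le_of_lt hi) hχr) hα0.le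
    calc (χ : ℝ) * q ^ α = ∑ _i ∈ Finset.range χ, q ^ α := by
          simp [mul_comm]
      _ ≤ _ := Finset.sum_le_sum this
  -- tail bound : P * q^(α-1) ≤ ∑_{i ∈ Ico χ r} p_i^α
  have htail : P * q ^ (α - 1) ≤ ∑ i ∈ Finset.Ico χ r, p i ^ α := by
    rw [hP, Finset.sum_mul]
    apply Finset.sum_le_sum
    intro i hi
    rw [Finset.mem_Ico] at hi
    have hpi0 : 0 ≤ p i := hnn i hi.2
    rcases hpi0.eq_or_lt with h | h
    · rw [← h]
      simp [Real.zero_rpow (ne_of_gt hα0)]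
    · have hle : p i ≤ q := hmono χ i hi.1 hi.2
      have : q ^ (α - 1) ≤ p i ^ (α - 1) :=
        Real.rpow_le_rpow_of_nonpos h hle (by linarith)
      calc p i * q ^ (α - 1) ≤ p i * p i ^ (α - 1) := by
            exact mul_le_mul_of_nonneg_left this hpi0
        _ = p i ^ (α - 1 + 1) := by
            rw [Real.rpow_add h, Real.rpow_one]; ring
        _ = p i ^ α := by norm_num
  have hsplit : S = ∑ i ∈ Finset.range χ, p i ^ α + ∑ i ∈ Finset.Ico χ r, p i ^ α := by
    rw [hS, Finset.range_eq_Ico, ← Finset.sum_Ico_consecutive _ (Nat.zero_le χ) hχr.le, ← Finset.range_eq_Ico]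
  have hSlb : (χ : ℝ) * q ^ α + P * q ^ (α - 1) ≤ S := by
    rw [hsplit]; exact add_le_add hhead htail
  -- weighted AM-GM
  have ha : (0:ℝ) < P * q ^ (α - 1) / α :=
    div_pos (mul_pos hP0 (Real.rpow_pos_of_pos hq0 _)) hα0
  have hb : (0:ℝ) < (χ : ℝ) * q ^ α / (1 - α) :=
    div_pos (mul_pos hχpos (Real.rpow_pos_of_pos hq0 _)) h1α
  have hamgm := Real.geom_mean_le_arith_mean2_weighted hα0.le h1α.le ha.le hb.le (by ring)
  have hsum2 : α * (P * q ^ (α - 1) / α) + (1 - α) * ((χ : ℝ) * q ^ α / (1 - α))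
      = P * q ^ (α - 1) + (χ : ℝ) * q ^ α := by
    field_simp
  -- compute the geometric mean: q-powers cancel
  have hgm : (P * q ^ (α - 1) / α) ^ α * ((χ : ℝ) * q ^ α / (1 - α)) ^ (1 - α)
      = (P / α) ^ α * ((χ : ℝ) / (1 - α)) ^ (1 - α) := by
    have e1 : P * q ^ (α - 1) / α = (P / α) * q ^ (α - 1) := by ring
    have e2 : (χ : ℝ) * q ^ α / (1 - α) = ((χ : ℝ) / (1 - α)) * q ^ α := by ring
    rw [e1, e2,
      Real.mul_rpow (div_pos hP0 hα0).le (Real.rpow_pos_of_pos hq0 _).le,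
      Real.mul_rpow (div_pos hχpos h1α).le (Real.rpow_pos_of_pos hq0 _).le,
      ← Real.rpow_mul hq0.le, ← Real.rpow_mul hq0.le]
    · rw [show (α - 1) * α = -(α * (1 - α)) by ring, Real.rpow_neg hq0.le]
      field_simp
  have hkey : (P / α) ^ α * ((χ : ℝ) / (1 - α)) ^ (1 - α) ≤ S := by
    calc (P / α) ^ α * ((χ : ℝ) / (1 - α)) ^ (1 - α)
        = (P * q ^ (α - 1) / α) ^ α * ((χ : ℝ) * q ^ α / (1 - α)) ^ (1 - α) := hgm.symm
      _ ≤ α * (P * q ^ (α - 1) / α) + (1 - α) * ((χ : ℝ) * q ^ α / (1 - α)) := hamgm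
      _ = P * q ^ (α - 1) + (χ : ℝ) * q ^ α := hsum2
      _ ≤ S := by linarith
  have hPα : P ^ α ≤ (P / α) ^ α := by
    apply Real.rpow_le_rpow hP0.le _ hα0.le
    rw [le_div_iff₀ hα0]
    nlinarith
  have hkey2 : P ^ α * ((χ : ℝ) / (1 - α)) ^ (1 - α) ≤ S :=
    le_trans (mul_le_mul_of_nonneg_right hPα (Real.rpow_pos_of_pos (div_pos hχpos h1α) _).le) hkey
  have hSpos : (0 : ℝ) < S :=
    lt_of_lt_of_le (mul_pos (Real.rpow_pos_of_pos hP0 _)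
      (Real.rpow_pos_of_pos (div_pos hχpos h1α) _)) hkey2
  -- take logarithms
  have hlog : α * Real.log P + (1 - α) * Real.log ((χ : ℝ) / (1 - α)) ≤ Real.log S := by
    have := Real.log_le_log (mul_pos (Real.rpow_pos_of_pos hP0 _)
      (Real.rpow_pos_of_pos (div_pos hχpos h1α) _)) hkey2
    rwa [Real.log_mul (Real.rpow_pos_of_pos hP0 _).ne'
        (Real.rpow_pos_of_pos (div_pos hχpos h1α) _).ne',
      Real.log_rpow hP0, Real.log_rpow (div_pos hχpos h1α)] at this
  have hfinal : Real.log P ≤ (1 - α) / α *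
      ((1 - α)⁻¹ * Real.log S - Real.log ((χ : ℝ) / (1 - α))) := by
    rw [div_mul_eq_mul_div, le_div_iff₀ hα0]
    have h1 : (1 - α) * ((1 - α)⁻¹ * Real.log S) = Real.log S := by
      field_simp
    nlinarith [hlog]
  calc P = Real.exp (Real.log P) := (Real.exp_log hP0).symm
    _ ≤ _ := Real.exp_le_exp.mpr hfinal
end

section
/- Let $p_1 \geq p_2 \geq \cdots \geq p_r \geq 0$ be a probability distribution and let $\alpha > 1$. Then the tail sum $p := \sum_{i=\chi+1}^{r} p_i$ satisfies $p \geq 1 - \exp\left(\frac{\alpha-1}{\alpha}\left(\log\chi - S^{(\alpha)}\right)\right)$, where $S^{(\alpha)} := \frac{1}{1-\alpha}\log\left(\sum_{i=1}^r p_i^{\alpha}\right)$. -/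
open Finset

/-- Rényi tail bound for `α > 1` (Lemma 1.b): the tail sum of a nonincreasing
probability distribution is bounded below using the Rényi entropy of order `α > 1`. -/
theorem renyi_tail_bound_alpha_gt_one (r χ : ℕ) (p : ℕ → ℝ) (α : ℝ)
    (hα : 1 < α)
    (hnn : ∀ i, i < r → 0 ≤ p i)
    (hmono : ∀ i j, i ≤ j → j < r → p j ≤ p i)
    (hsum : ∑ i ∈ Finset.range r, p i = 1)
    (hχ1 : 1 ≤ χ) (hχr : χ < r) :
    1 - Real.exp ((α - 1) / α *
        (Real.log (χ : ℝ) -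
          (1 - α)⁻¹ * Real.log (∑ i ∈ Finset.range r, p i ^ α))) ≤
      ∑ i ∈ Finset.Ico χ r, p i := by
  have hα0 : (0:ℝ) < α := lt_trans one_pos hα
  set T : ℝ := ∑ i ∈ Finset.range r, p i ^ α with hTdef
  have hTnn : 0 ≤ T := Finset.sum_nonneg fun i hi =>
    Real.rpow_nonneg (hnn i (Finset.mem_range.mp hi)) α
  have hT : 0 < T := by
    rcases lt_or_eq_of_le hTnn with h | h
    · exact h
    · exfalso
      have hz : ∀ i ∈ Finset.range r, p i ^ α = 0 := by
        intro i hi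
        have := (Finset.sum_eq_zero_iff_of_nonneg fun j hj =>
          Real.rpow_nonneg (hnn j (Finset.mem_range.mp hj)) α).mp h.symm
        exact this i hi
      have : ∀ i ∈ Finset.range r, p i = 0 := by
        intro i hi
        have h0 := hz i hi
        exact (Real.rpow_eq_zero (hnn i (Finset.mem_range.mp hi)) (ne_of_gt hα0)).mp h0
      rw [Finset.sum_eq_zero this] at hsum
      norm_num at hsum
  -- Hölder: head sum bound
  have hq : α.HolderConjugate (α / (α - 1)) := by
    exact (Real.holderConjugate_iff_eq_conjExponent hα).mpr rfl
  have holder := Real.inner_le_Lp_mul_Lq_of_nonneg (s := Finset.range χ)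
    (f := p) (g := fun _ => (1:ℝ)) hq
    (fun i hi => hnn i (lt_of_lt_of_le (Finset.mem_range.mp hi) hχr.le))
    (fun i _ => zero_le_one)
  simp only [mul_one, Real.one_rpow, Finset.sum_const, Finset.card_range,
    nsmul_eq_mul] at holder
  have hhead : ∑ i ∈ Finset.range χ, p i ≤
      (∑ i ∈ Finset.range χ, p i ^ α) ^ (1/α) * (χ : ℝ) ^ ((α-1)/α) := by
    calc ∑ i ∈ Finset.range χ, p i
        ≤ (∑ i ∈ Finset.range χ, p i ^ α) ^ (1/α) *
          ((χ : ℝ) * 1) ^ (1 / (α / (α - 1))) := by simpa using holder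
      _ = (∑ i ∈ Finset.range χ, p i ^ α) ^ (1/α) * (χ : ℝ) ^ ((α-1)/α) := by
          rw [mul_one, one_div, one_div, inv_div]
  have hmonoT : (∑ i ∈ Finset.range χ, p i ^ α) ≤ T := by
    apply Finset.sum_le_sum_of_subset_of_nonneg
    · exact Finset.range_subset_range.mpr hχr.le
    · intro i hi _; exact Real.rpow_nonneg (hnn i (Finset.mem_range.mp hi)) α
  have hhead2 : ∑ i ∈ Finset.range χ, p i ≤ T ^ (1/α) * (χ : ℝ) ^ ((α-1)/α) := by
    refine le_trans hhead (mul_le_mul_of_nonneg_right ?_ (Real.rpow_nonneg (by positivity) _))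
    exact Real.rpow_le_rpow (Finset.sum_nonneg fun i hi =>
      Real.rpow_nonneg (hnn i (lt_of_lt_of_le (Finset.mem_range.mp hi) hχr.le)) α)
      hmonoT (by positivity)
  -- identify the exponential
  have hχpos : (0:ℝ) < (χ : ℝ) := by exact_mod_cast Nat.lt_of_lt_of_le Nat.zero_lt_one hχ1
  have hexp : Real.exp ((α - 1) / α * (Real.log (χ : ℝ) - (1 - α)⁻¹ * Real.log T)) =
      T ^ (1/α) * (χ : ℝ) ^ ((α-1)/α) := by
    have h1 : (α - 1) / α * (Real.log (χ : ℝ) - (1 - α)⁻¹ * Real.log T) =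
        (α-1)/α * Real.log (χ : ℝ) + (1/α) * Real.log T := by
      have hne : (1 : ℝ) - α ≠ 0 := by intro h; nlinarith
      field_simp
      ring
    rw [h1, Real.exp_add, Real.rpow_def_of_pos hT, Real.rpow_def_of_pos hχpos,
      mul_comm (Real.log T), mul_comm (Real.log (χ:ℝ)), mul_comm]
  -- conclude
  have hsplit : (∑ i ∈ Finset.range χ, p i) + (∑ i ∈ Finset.Ico χ r, p i) = 1 := by
    rw [Finset.sum_range_add_sum_Ico _ hχr.le, hsum]
  rw [hexp]
  linarith [hhead2]
end

section
/- Let $p_1 \geq p_2 \geq \cdots \geq p_r \geq 0$ be a probability distribution and let $0 < \alpha < 1$. Then $\sqrt{p_{\chi+1}} \leq \exp\left(\frac{1-\alpha}{2\alpha} S^{(\alpha)} - \frac{\log\chi}{2\alpha}\right)$, where $S^{(\alpha)} := \frac{1}{1-\alpha}\log\left(\sum_{i=1}^r p_i^{\alpha}\right)$. -/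
open Finset

/-- Lemma 1.c: bound on the square root of the `(χ+1)`-th element of a nonincreasing
probability distribution in terms of the Rényi entropy of order `α ∈ (0,1)`.
(`p χ` in 0-based indexing is `p_{χ+1}` in the paper's 1-based indexing.) -/
theorem sqrt_schmidt_coeff_bound (r χ : ℕ) (p : ℕ → ℝ) (α : ℝ)
    (hα0 : 0 < α) (hα1 : α < 1)
    (hnn : ∀ i, i < r → 0 ≤ p i)
    (hmono : ∀ i j, i ≤ j → j < r → p j ≤ p i)
    (hsum : ∑ i ∈ Finset.range r, p i = 1)
    (hχ1 : 1 ≤ χ) (hχr : χ < r) :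
    Real.sqrt (p χ) ≤
      Real.exp ((1 - α) / (2 * α) *
          ((1 - α)⁻¹ * Real.log (∑ i ∈ Finset.range r, p i ^ α)) -
        Real.log (χ : ℝ) / (2 * α)) := by
  have hpχ0 : 0 ≤ p χ := hnn χ hχr
  set S := ∑ i ∈ Finset.range r, p i ^ α with hS
  have hSge : (χ : ℝ) * p χ ^ α ≤ S := by
    calc (χ : ℝ) * p χ ^ α = ∑ _i ∈ Finset.range χ, p χ ^ α := by
          rw [Finset.sum_const, card_range, nsmul_eq_mul]
      _ ≤ ∑ i ∈ Finset.range χ, p i ^ α := by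
          refine Finset.sum_le_sum fun i hi => ?_
          exact Real.rpow_le_rpow hpχ0
            (hmono i χ (le_of_lt (mem_range.mp hi)) hχr) hα0.le
      _ ≤ S := Finset.sum_le_sum_of_subset_of_nonneg
          (Finset.range_subset_range.mpr hχr.le)
          (fun i hi _ => Real.rpow_nonneg (hnn i (mem_range.mp hi)) α)
  rcases eq_or_lt_of_le hpχ0 with h0 | hpos
  · rw [← h0, Real.sqrt_zero]
    exact (Real.exp_pos _).le
  · have hχpos : (0 : ℝ) < χ := by exact_mod_cast hχ1
    have hmul : 0 < (χ : ℝ) * p χ ^ α := mul_pos hχpos (Real.rpow_pos_of_pos hpos _)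
    have hSpos : 0 < S := lt_of_lt_of_le hmul hSge
    have hlog : Real.log χ + α * Real.log (p χ) ≤ Real.log S := by
      have := Real.log_le_log hmul hSge
      rwa [Real.log_mul (ne_of_gt hχpos) (ne_of_gt (Real.rpow_pos_of_pos hpos _)),
        Real.log_rpow hpos] at this
    rw [← Real.exp_log (Real.sqrt_pos.mpr hpos), Real.exp_le_exp, Real.log_sqrt hpχ0]
    have hne : (1 : ℝ) - α ≠ 0 := by linarith
    have hαne : α ≠ 0 := ne_of_gt hα0
    have hrw : (1 - α) / (2 * α) * ((1 - α)⁻¹ * Real.log S) - Real.log χ / (2 * α)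
        = (Real.log S - Real.log χ) / (2 * α) := by
      field_simp
    rw [hrw]
    rw [div_le_div_iff₀ (by norm_num) (by positivity)]
    nlinarith [hlog]
end

section
/- Let $p_1 \geq p_2 \geq \cdots \geq p_r \geq 0$ sum to 1, fix $\chi \geq 1$ and set $x := p_{\chi+1}$, assuming $\chi x \leq 1$. Then for $0 < \alpha < 1$, $\sum_{i=1}^r p_i^{\alpha} \geq \chi x^{\alpha} + (1 - \chi x)^{\alpha}$; that is, the distribution $(1-\chi x, x, x, \ldots, x, 0, \ldots)$ with $\chi$ copies of $x$ minimizes $\sum_i p_i^{\alpha}$ among all nonincreasing distributions with $(\chi+1)$-th entry equal to $x$. -/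
open Finset

/-- Chord inequality for the concave function `t ↦ t ^ α`, `α ∈ (0,1)`. -/
lemma rpow_chord (α : ℝ) (hα0 : 0 < α) (hα1 : α < 1) {a b t : ℝ} (ha : 0 ≤ a)
    (hab : a < b) (h1 : a ≤ t) (h2 : t ≤ b) :
    a ^ α + (t - a) * ((b ^ α - a ^ α) / (b - a)) ≤ t ^ α := by
  have hconc := (Real.strictConcaveOn_rpow hα0 hα1).concaveOn
  have hba : (0:ℝ) < b - a := sub_pos.mpr hab
  set u : ℝ := (b - t) / (b - a) with hu
  set v : ℝ := (t - a) / (b - a) with hv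
  have hu0 : 0 ≤ u := div_nonneg (by linarith) hba.le
  have hv0 : 0 ≤ v := div_nonneg (by linarith) hba.le
  have huv : u + v = 1 := by
    rw [hu, hv, ← add_div, div_eq_one_iff_eq hba.ne']; ring
  have hcomb : u • a + v • b = t := by
    simp only [smul_eq_mul, hu, hv]
    field_simp
    ring
  have hb0 : (0:ℝ) ≤ b := le_trans ha hab.le
  have := hconc.2 (Set.mem_Ici.mpr ha) (Set.mem_Ici.mpr hb0) hu0 hv0 huv
  rw [hcomb] at this
  refine le_trans (le_of_eq ?_) this
  simp only [smul_eq_mul, hu, hv]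
  field_simp
  ring

/-- Tail chord inequality: for `0 ≤ t ≤ x`, `t * x ^ (α - 1) ≤ t ^ α`. -/
lemma rpow_tail_chord (α : ℝ) (hα0 : 0 < α) (hα1 : α < 1) {x t : ℝ} (ht : 0 ≤ t)
    (htx : t ≤ x) : t * x ^ (α - 1) ≤ t ^ α := by
  rcases eq_or_lt_of_le (le_trans ht htx) with h | hx0
  · have : t = 0 := le_antisymm (h ▸ htx) ht
    simp [this, Real.zero_rpow (ne_of_gt hα0)]
  · have := rpow_chord α hα0 hα1 (le_refl 0) hx0 ht htx
    rw [Real.zero_rpow (ne_of_gt hα0)] at this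
    calc t * x ^ (α - 1) = 0 + (t - 0) * ((x ^ α - 0) / (x - 0)) := by
          rw [Real.rpow_sub_one (ne_of_gt hx0)]; ring
      _ ≤ t ^ α := this

/-- The flat distribution `(1 - χx, x, …, x, 0, …)` (with `χ` copies of `x := p_{χ+1}`)
minimizes `∑ pᵢ^α` for `α ∈ (0,1)` among nonincreasing distributions with the given
`(χ+1)`-th entry. (`p χ` in 0-based indexing is `p_{χ+1}` in 1-based indexing.) -/
theorem renyi_sum_ge_flat_distribution (r χ : ℕ) (p : ℕ → ℝ) (α : ℝ)
    (hα0 : 0 < α) (hα1 : α < 1)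
    (hnn : ∀ i, i < r → 0 ≤ p i)
    (hmono : ∀ i j, i ≤ j → j < r → p j ≤ p i)
    (hsum : ∑ i ∈ Finset.range r, p i = 1)
    (hχ1 : 1 ≤ χ) (hχr : χ < r)
    (hx : (χ : ℝ) * p χ ≤ 1) :
    (χ : ℝ) * (p χ) ^ α + (1 - (χ : ℝ) * p χ) ^ α ≤
      ∑ i ∈ Finset.range r, p i ^ α := by
  set x := p χ with hxdef
  set T : ℝ := 1 - (χ : ℝ) * x with hTdef
  have hx0 : 0 ≤ x := hnn χ hχr
  have hpx : ∀ i, i ≤ χ → x ≤ p i := fun i hi => hmono i χ hi hχr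
  have hr0 : 0 < r := lt_of_le_of_lt (Nat.zero_le χ) hχr
  -- p 0 ≤ T
  have hsub : Finset.range (χ + 1) ⊆ Finset.range r := by
    intro i hi; simp only [Finset.mem_range] at *; omega
  have hsum1 : ∑ i ∈ Finset.range (χ + 1), p i ≤ 1 := by
    rw [← hsum]
    exact Finset.sum_le_sum_of_subset_of_nonneg hsub
      (fun i hi _ => hnn i (Finset.mem_range.mp hi))
  have hsplit1 : ∑ i ∈ Finset.range (χ + 1), p i
      = (∑ i ∈ Finset.range χ, p (i + 1)) + p 0 := Finset.sum_range_succ' p χ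
  have hlow : (χ : ℝ) * x ≤ ∑ i ∈ Finset.range χ, p (i + 1) := by
    calc (χ : ℝ) * x = ∑ _i ∈ Finset.range χ, x := by
          rw [Finset.sum_const, nsmul_eq_mul, Finset.card_range]
      _ ≤ ∑ i ∈ Finset.range χ, p (i + 1) :=
          Finset.sum_le_sum fun i hi => hpx (i + 1) (Finset.mem_range.mp hi)
  have hp0T : p 0 ≤ T := by
    have := hsplit1 ▸ hsum1
    simp only [hTdef]; linarith
  have hpiT : ∀ i, i < r → p i ≤ T := fun i hi =>
    le_trans (hmono 0 i (Nat.zero_le i) hi) hp0T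
  have hxT : x ≤ T := le_trans (hpx 0 (Nat.zero_le χ)) hp0T
  -- split the sums
  have hsplit : ∀ f : ℕ → ℝ, (∑ i ∈ Finset.range χ, f i) + ∑ i ∈ Finset.Ico χ r, f i
      = ∑ i ∈ Finset.range r, f i := fun f =>
    Finset.sum_range_add_sum_Ico f (le_of_lt hχr)
  set S1 : ℝ := ∑ i ∈ Finset.range χ, p i with hS1
  set S2 : ℝ := ∑ i ∈ Finset.Ico χ r, p i with hS2
  have hS12 : S1 + S2 = 1 := by rw [hS1, hS2, hsplit p, hsum]
  have hS2x : x ≤ S2 :=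
    Finset.single_le_sum (f := p)
      (fun i hi => hnn i (Finset.mem_Ico.mp hi).2)
      (Finset.mem_Ico.mpr ⟨le_refl χ, hχr⟩)
  rcases eq_or_lt_of_le hxT with hTx | hTx
  · -- degenerate case: T = x, everything is forced
    have hpeq : ∀ i, i ≤ χ → p i = x := fun i hi =>
      le_antisymm (le_trans (hmono 0 i (Nat.zero_le i) (lt_of_le_of_lt hi hχr))
        (hTx ▸ hp0T)) (hpx i hi)
    have hhead : ∑ i ∈ Finset.range (χ + 1), p i = ((χ : ℝ) + 1) * x := by
      rw [Finset.sum_congr rfl (fun i hi => hpeq i (by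
        simp only [Finset.mem_range] at hi; omega))]
      rw [Finset.sum_const, nsmul_eq_mul, Finset.card_range]
      push_cast; ring
    have htail0 : ∑ i ∈ Finset.Ico (χ + 1) r, p i = 0 := by
      have h1 : (∑ i ∈ Finset.range (χ + 1), p i) + ∑ i ∈ Finset.Ico (χ + 1) r, p i = 1 := by
        rw [Finset.sum_range_add_sum_Ico p hχr, hsum]
      have hT1 : ((χ : ℝ) + 1) * x = 1 := by
        have : T = x := hTx.symm
        simp only [hTdef] at this; linarith
      rw [hhead, hT1] at h1; linarith
    have htaileq : ∀ i ∈ Finset.Ico (χ + 1) r, p i = 0 := by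
      rw [← Finset.sum_eq_zero_iff_of_nonneg
        (fun i hi => hnn i (Finset.mem_Ico.mp hi).2)] at *
      exact htail0
    have : ∑ i ∈ Finset.range r, p i ^ α = ((χ : ℝ) + 1) * x ^ α := by
      rw [← Finset.sum_range_add_sum_Ico (fun i => p i ^ α) hχr]
      have h1 : ∑ i ∈ Finset.range (χ + 1), p i ^ α = ((χ : ℝ) + 1) * x ^ α := by
        rw [Finset.sum_congr rfl (fun i hi => by
          rw [hpeq i (by simp only [Finset.mem_range] at hi; omega)])]
        rw [Finset.sum_const, nsmul_eq_mul, Finset.card_range]; push_cast; ring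
      have h2 : ∑ i ∈ Finset.Ico (χ + 1) r, p i ^ α = 0 :=
        Finset.sum_eq_zero fun i hi => by
          rw [htaileq i hi, Real.zero_rpow (ne_of_gt hα0)]
      rw [h1, h2, add_zero]
    rw [this, ← hTx]
    have hexp : ((χ : ℝ) + 1) * x ^ α = (χ : ℝ) * x ^ α + x ^ α := by ring
    linarith
  · -- main case: x < T
    set c : ℝ := (T ^ α - x ^ α) / (T - x) with hc
    have hTx0 : (0:ℝ) < T - x := sub_pos.mpr hTx
    have hT0 : 0 < T := lt_of_le_of_lt hx0 hTx
    -- head bound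
    have hhead : ∑ i ∈ Finset.range χ, (x ^ α + (p i - x) * c)
        ≤ ∑ i ∈ Finset.range χ, p i ^ α := by
      refine Finset.sum_le_sum fun i hi => ?_
      have hiχ : i < χ := Finset.mem_range.mp hi
      exact rpow_chord α hα0 hα1 hx0 hTx (hpx i (le_of_lt hiχ))
        (hpiT i (lt_trans hiχ hχr))
    -- tail bound
    have htail : ∑ i ∈ Finset.Ico χ r, p i * x ^ (α - 1)
        ≤ ∑ i ∈ Finset.Ico χ r, p i ^ α := by
      refine Finset.sum_le_sum fun i hi => ?_
      obtain ⟨h1, h2⟩ := Finset.mem_Ico.mp hi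
      exact rpow_tail_chord α hα0 hα1 (hnn i h2) (hmono χ i h1 h2)
    have hheadsum : ∑ i ∈ Finset.range χ, (x ^ α + (p i - x) * c)
        = (χ : ℝ) * x ^ α + (S1 - (χ : ℝ) * x) * c := by
      rw [Finset.sum_add_distrib, Finset.sum_const, nsmul_eq_mul, ← Finset.sum_mul,
        Finset.sum_sub_distrib, Finset.sum_const, nsmul_eq_mul, ← hS1, Finset.card_range]
    have htailsum : ∑ i ∈ Finset.Ico χ r, p i * x ^ (α - 1) = S2 * x ^ (α - 1) := by
      rw [← Finset.sum_mul, ← hS2]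
    -- key algebraic identity and sign
    have hcid : (T - x) * c = T ^ α - x ^ α := by
      rw [hc, mul_div_assoc', mul_div_cancel_left₀ _ hTx0.ne']
    have hxx : x * x ^ (α - 1) = x ^ α := by
      rcases eq_or_lt_of_le hx0 with h | h
      · rw [← h, Real.zero_rpow (ne_of_gt hα0), mul_comm, mul_zero]
      · rw [Real.rpow_sub_one (ne_of_gt h)]
        field_simp
    have hkey : (0:ℝ) ≤ (x - S2) * (c - x ^ (α - 1)) := by
      rcases eq_or_lt_of_le hx0 with h | h
      · have hS20 : S2 ≤ 0 := Finset.sum_nonpos fun i hi => by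
          have := hmono χ i (Finset.mem_Ico.mp hi).1 (Finset.mem_Ico.mp hi).2
          rw [← hxdef, ← h] at this; exact this
        have : S2 = 0 := le_antisymm hS20 (le_trans hx0 hS2x)
        rw [this, ← h, sub_zero, zero_mul]
      · have hcx : c ≤ x ^ (α - 1) := by
          rw [hc, div_le_iff₀ hTx0]
          have h1 : T ^ (α - 1) ≤ x ^ (α - 1) :=
            Real.rpow_le_rpow_of_nonpos h hxT (by linarith)
          have h2 : T ^ α = T ^ (α - 1) * T := by
            rw [Real.rpow_sub_one (ne_of_gt hT0)]
            field_simp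
          nlinarith [Real.rpow_nonneg hx0 (α - 1)]
        have := mul_nonneg (show (0:ℝ) ≤ S2 - x by linarith)
          (show (0:ℝ) ≤ x ^ (α - 1) - c by linarith)
        nlinarith
    -- conclude
    have hfinal : (χ : ℝ) * x ^ α + T ^ α
        ≤ (χ : ℝ) * x ^ α + (S1 - (χ : ℝ) * x) * c + S2 * x ^ (α - 1) := by
      have hS1T : S1 - (χ : ℝ) * x = T - S2 := by
        simp only [hTdef]; linarith
      rw [hS1T]
      have : (T - S2) * c + S2 * x ^ (α - 1) - T ^ α = (x - S2) * (c - x ^ (α - 1)) := by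
        linear_combination hcid + hxx
      linarith
    calc (χ : ℝ) * x ^ α + (1 - (χ : ℝ) * x) ^ α
        = (χ : ℝ) * x ^ α + T ^ α := by rw [hTdef]
      _ ≤ (χ : ℝ) * x ^ α + (S1 - (χ : ℝ) * x) * c + S2 * x ^ (α - 1) := hfinal
      _ = (∑ i ∈ Finset.range χ, (x ^ α + (p i - x) * c))
            + ∑ i ∈ Finset.Ico χ r, p i * x ^ (α - 1) := by
          rw [hheadsum, htailsum]
      _ ≤ (∑ i ∈ Finset.range χ, p i ^ α) + ∑ i ∈ Finset.Ico χ r, p i ^ α :=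
          add_le_add hhead htail
      _ = ∑ i ∈ Finset.range r, p i ^ α := hsplit (fun i => p i ^ α)
end

section
/- Let $O, \tilde{O}, X$ be $D \times D$ complex matrices with $\|O\|_\infty \leq 1$, $\|X\|_\infty \leq 1$, $\|\tilde{O}\|_2 \leq \sqrt{D}$, and $\|\tilde{O}\|_\infty > 1$. Then for any $k \geq 2$, $\frac{1}{D}\big|\mathrm{tr}[(OX)^k] - \mathrm{tr}[(\tilde{O}X)^k]\big| \leq \frac{\|O - \tilde{O}\|_2}{\sqrt{D}}\left(\frac{\|\tilde{O}\|_\infty^{k-1} - 1}{\|\tilde{O}\|_\infty - 1} + 1\right)$. -/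
open Matrix
open scoped ComplexOrder

/-- The spectral (operator) norm of a matrix, `‖X‖_∞`. -/
noncomputable def opNorm {D : ℕ} (X : Matrix (Fin D) (Fin D) ℂ) : ℝ :=
  ‖Matrix.toEuclideanCLM (𝕜 := ℂ) X‖

/-- The Frobenius (Hilbert–Schmidt) norm of a matrix, `‖X‖₂ = √tr(X†X)`. -/
noncomputable def frob {D : ℕ} (X : Matrix (Fin D) (Fin D) ℂ) : ℝ :=
  Real.sqrt ((Xᴴ * X).trace.re)

variable {D : ℕ}

lemma trace_re_eq (A : Matrix (Fin D) (Fin D) ℂ) :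
    (Aᴴ * A).trace.re = ∑ i, ∑ j, ‖A j i‖ ^ 2 := by
  simp only [Matrix.trace, Matrix.diag, Matrix.mul_apply, Matrix.conjTranspose_apply]
  rw [Complex.re_sum]
  refine Finset.sum_congr rfl fun i _ => ?_
  rw [Complex.re_sum]
  refine Finset.sum_congr rfl fun j _ => ?_
  have : star (A j i) * A j i = (starRingEnd ℂ) (A j i) * A j i := rfl
  rw [this, ← Complex.normSq_eq_conj_mul_self]
  rw [Complex.normSq_eq_norm_sq]
  norm_cast

lemma frob_eq (A : Matrix (Fin D) (Fin D) ℂ) :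
    frob A = Real.sqrt (∑ i, ∑ j, ‖A j i‖ ^ 2) := by
  rw [frob, trace_re_eq]

open scoped Matrix.Norms.L2Operator
set_option maxHeartbeats 2000000
set_option synthInstance.maxHeartbeats 400000

lemma opNorm_def (A : Matrix (Fin D) (Fin D) ℂ) : opNorm A = ‖A‖ := rfl

lemma frob_nonneg (A : Matrix (Fin D) (Fin D) ℂ) : 0 ≤ frob A := Real.sqrt_nonneg _

lemma opNorm_nonneg (A : Matrix (Fin D) (Fin D) ℂ) : 0 ≤ opNorm A := norm_nonneg _

lemma trace_abs_le (A B : Matrix (Fin D) (Fin D) ℂ) :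
    ‖(A * B).trace‖ ≤ frob A * frob B := by
  classical
  set f : EuclideanSpace ℂ (Fin D × Fin D) := WithLp.toLp 2 (fun p : Fin D × Fin D => (starRingEnd ℂ) (A p.1 p.2)) with hf
  set g : EuclideanSpace ℂ (Fin D × Fin D) := WithLp.toLp 2 (fun p : Fin D × Fin D => B p.2 p.1) with hg
  have h1 : (A * B).trace = inner ℂ f g := by
    simp only [PiLp.inner_apply, RCLike.inner_apply, hf, hg, PiLp.toLp_apply, starRingEnd_self_apply,
      Matrix.trace, Matrix.diag, Matrix.mul_apply, Fintype.sum_prod_type, mul_comm]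
  have h2 : ‖f‖ = frob A := by
    rw [EuclideanSpace.norm_eq, frob_eq]
    congr 1
    rw [Fintype.sum_prod_type, Finset.sum_comm]
    simp [hf]
  have h3 : ‖g‖ = frob B := by
    rw [EuclideanSpace.norm_eq, frob_eq]
    congr 1
    rw [Fintype.sum_prod_type]
  calc ‖(A * B).trace‖ = ‖(inner ℂ f g : ℂ)‖ := by rw [h1]
    _ ≤ ‖f‖ * ‖g‖ := norm_inner_le_norm f g
    _ = frob A * frob B := by rw [h2, h3]

lemma opNorm_mul_le (A B : Matrix (Fin D) (Fin D) ℂ) :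
    opNorm (A * B) ≤ opNorm A * opNorm B := Matrix.l2_opNorm_mul A B

lemma opNorm_conjTranspose (A : Matrix (Fin D) (Fin D) ℂ) : opNorm Aᴴ = opNorm A :=
  Matrix.l2_opNorm_conjTranspose A

lemma frob_conjTranspose (A : Matrix (Fin D) (Fin D) ℂ) : frob Aᴴ = frob A := by
  rw [frob_eq, frob_eq, Finset.sum_comm]
  simp [Matrix.conjTranspose_apply]

lemma frob_mul_le_left (M N : Matrix (Fin D) (Fin D) ℂ) :
    frob (M * N) ≤ opNorm M * frob N := by
  classical
  have key : ∀ j, ∑ i, ‖(M * N) i j‖ ^ 2 ≤ opNorm M ^ 2 * ∑ i, ‖N i j‖ ^ 2 := by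
    intro j
    have hv := Matrix.l2_opNorm_mulVec M ((EuclideanSpace.equiv (Fin D) ℂ).symm (fun i => N i j))
    have hnl : ‖(EuclideanSpace.equiv (Fin D) ℂ).symm
          (M *ᵥ ((EuclideanSpace.equiv (Fin D) ℂ).symm (fun i => N i j)))‖
        = Real.sqrt (∑ i, ‖(M * N) i j‖ ^ 2) := by
      rw [EuclideanSpace.norm_eq]
      apply congrArg
      refine Finset.sum_congr rfl fun i _ => ?_
      rfl
    have hnr : ‖(EuclideanSpace.equiv (Fin D) ℂ).symm (fun i => N i j)‖
        = Real.sqrt (∑ i, ‖N i j‖ ^ 2) := by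
      rw [EuclideanSpace.norm_eq]
      rfl
    rw [hnl, hnr] at hv
    have h0 : (0:ℝ) ≤ Real.sqrt (∑ i, ‖(M * N) i j‖ ^ 2) := Real.sqrt_nonneg _
    rw [← opNorm_def] at hv
    calc ∑ i, ‖(M * N) i j‖ ^ 2
        = Real.sqrt (∑ i, ‖(M * N) i j‖ ^ 2) * Real.sqrt (∑ i, ‖(M * N) i j‖ ^ 2) := by
          rw [Real.mul_self_sqrt (by positivity)]
      _ ≤ (opNorm M * Real.sqrt (∑ i, ‖N i j‖ ^ 2)) *
          (opNorm M * Real.sqrt (∑ i, ‖N i j‖ ^ 2)) := mul_self_le_mul_self h0 hv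
      _ = opNorm M ^ 2 * ∑ i, ‖N i j‖ ^ 2 := by
          rw [mul_mul_mul_comm, Real.mul_self_sqrt (by positivity), sq]
  rw [frob_eq, frob_eq]
  rw [show (opNorm M : ℝ) = Real.sqrt (opNorm M ^ 2) from
    (Real.sqrt_sq (opNorm_nonneg M)).symm]
  rw [← Real.sqrt_mul (by positivity)]
  apply Real.sqrt_le_sqrt
  rw [Finset.mul_sum]
  exact Finset.sum_le_sum fun j _ => key j

lemma frob_mul_le_right (M N : Matrix (Fin D) (Fin D) ℂ) :
    frob (M * N) ≤ frob M * opNorm N := by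
  calc frob (M * N) = frob ((M * N)ᴴ) := (frob_conjTranspose _).symm
    _ = frob (Nᴴ * Mᴴ) := by rw [Matrix.conjTranspose_mul]
    _ ≤ opNorm Nᴴ * frob Mᴴ := frob_mul_le_left _ _
    _ = frob M * opNorm N := by rw [opNorm_conjTranspose, frob_conjTranspose]; ring

lemma frob_one : frob (1 : Matrix (Fin D) (Fin D) ℂ) = Real.sqrt D := by
  rw [frob]
  congr 1
  simp [Matrix.trace]

lemma frob_pow_mul (A C : Matrix (Fin D) (Fin D) ℂ) (i : ℕ) :
    frob (A ^ i * C) ≤ opNorm A ^ i * frob C := by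
  induction i with
  | zero => simp
  | succ n ih =>
    calc frob (A ^ (n+1) * C) = frob (A * (A ^ n * C)) := by
          rw [pow_succ', mul_assoc]
      _ ≤ opNorm A * frob (A ^ n * C) := frob_mul_le_left _ _
      _ ≤ opNorm A * (opNorm A ^ n * frob C) :=
          mul_le_mul_of_nonneg_left ih (opNorm_nonneg A)
      _ = opNorm A ^ (n+1) * frob C := by ring

lemma frob_pow_succ (B : Matrix (Fin D) (Fin D) ℂ) (m : ℕ) :
    frob (B ^ (m + 1)) ≤ opNorm B ^ m * frob B := by
  have h := frob_pow_mul B B m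
  rwa [← pow_succ] at h

lemma sub_pow_telescope (A B : Matrix (Fin D) (Fin D) ℂ) (n : ℕ) :
    A ^ n - B ^ n = ∑ i ∈ Finset.range n, A ^ i * (A - B) * B ^ (n - 1 - i) := by
  induction n with
  | zero => simp
  | succ n ih =>
    rw [Finset.sum_range_succ]
    have hrw : ∀ i ∈ Finset.range n,
        A ^ i * (A - B) * B ^ (n + 1 - 1 - i) = (A ^ i * (A - B) * B ^ (n - 1 - i)) * B := by
      intro i hi
      rw [Finset.mem_range] at hi
      have h1 : n + 1 - 1 - i = (n - 1 - i) + 1 := by omega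
      rw [h1, pow_succ, ← mul_assoc]
    rw [Finset.sum_congr rfl hrw, ← Finset.sum_mul, ← ih]
    have h2 : n + 1 - 1 - n = 0 := by omega
    rw [h2, pow_zero, mul_one, pow_succ, pow_succ]
    noncomm_ring


/-- OTOC error bound: the difference of `2k`-point OTOCs of `O` and an
approximation `Õ` is controlled by the normalized Frobenius error. -/
theorem otoc_error_bound {D : ℕ} (hD : 0 < D) (k : ℕ) (hk : 2 ≤ k)
    (O Otil X : Matrix (Fin D) (Fin D) ℂ)
    (hO : opNorm O ≤ 1) (hX : opNorm X ≤ 1)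
    (hOtil2 : frob Otil ≤ Real.sqrt D)
    (hOtilInf : 1 < opNorm Otil) :
    (1 / D) * ‖((O * X) ^ k).trace - ((Otil * X) ^ k).trace‖ ≤
      frob (O - Otil) / Real.sqrt D *
        ((opNorm Otil ^ (k - 1) - 1) / (opNorm Otil - 1) + 1) := by
  classical
  set A := O * X with hAdef
  set B := Otil * X with hBdef
  set t := opNorm Otil with htdef
  set C := frob (O - Otil) with hCdef
  set g : ℕ → ℝ := fun m => if m = 0 then 1 else t ^ (m - 1) with hgdef
  have hC : 0 ≤ C := frob_nonneg _
  have hDpos : (0:ℝ) < D := by exact_mod_cast hD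
  have hsDpos : 0 < Real.sqrt D := Real.sqrt_pos.mpr hDpos
  have hsD : Real.sqrt D * Real.sqrt D = (D:ℝ) := Real.mul_self_sqrt hDpos.le
  have hA : opNorm A ≤ 1 := (opNorm_mul_le O X).trans
    (by nlinarith [opNorm_nonneg O, opNorm_nonneg X])
  have hB : opNorm B ≤ t := (opNorm_mul_le Otil X).trans
    (by nlinarith [opNorm_nonneg Otil, opNorm_nonneg X])
  have hfB : frob B ≤ Real.sqrt D := (frob_mul_le_right Otil X).trans
    (by nlinarith [frob_nonneg Otil])
  have hAB : frob (A - B) ≤ C := by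
    have h : A - B = (O - Otil) * X := by rw [hAdef, hBdef, Matrix.sub_mul]
    rw [h]
    exact (frob_mul_le_right _ _).trans (by nlinarith [frob_nonneg (O - Otil)])
  have hBm : ∀ m, frob (B ^ m) ≤ Real.sqrt D * g m := by
    intro m
    cases m with
    | zero => simp [hgdef, frob_one]
    | succ n =>
      have hif : g (n + 1) = t ^ n := by simp [hgdef]
      rw [hif]
      calc frob (B ^ (n+1)) ≤ opNorm B ^ n * frob B := frob_pow_succ B n
        _ ≤ t ^ n * Real.sqrt D := by
            apply mul_le_mul (pow_le_pow_left₀ (opNorm_nonneg B) hB n) hfB (frob_nonneg _)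
            positivity
        _ = Real.sqrt D * t ^ n := mul_comm _ _
  have hterm : ∀ i ∈ Finset.range k,
      ‖(A ^ i * (A - B) * B ^ (k - 1 - i)).trace‖
        ≤ C * Real.sqrt D * g (k - 1 - i) := by
    intro i _
    have hg0 : 0 ≤ g (k - 1 - i) := by
      rw [hgdef]; dsimp only; split <;> positivity
    calc ‖(A ^ i * (A - B) * B ^ (k-1-i)).trace‖
        ≤ frob (A ^ i * (A - B)) * frob (B ^ (k-1-i)) := trace_abs_le _ _
      _ ≤ (1 * C) * (Real.sqrt D * g (k - 1 - i)) := by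
          apply mul_le_mul _ (hBm _) (frob_nonneg _) (by positivity)
          calc frob (A ^ i * (A - B)) ≤ opNorm A ^ i * frob (A - B) := frob_pow_mul _ _ _
            _ ≤ 1 * C := mul_le_mul (pow_le_one₀ (opNorm_nonneg A) hA) hAB
                (frob_nonneg _) zero_le_one
      _ = C * Real.sqrt D * g (k - 1 - i) := by ring
  have htrace : ((O * X) ^ k).trace - ((Otil * X) ^ k).trace
      = ∑ i ∈ Finset.range k, (A ^ i * (A - B) * B ^ (k - 1 - i)).trace := by
    rw [← Matrix.trace_sub, ← Matrix.trace_sum, ← sub_pow_telescope]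
  have habs : ‖((O * X) ^ k).trace - ((Otil * X) ^ k).trace‖
      ≤ C * Real.sqrt D * ∑ i ∈ Finset.range k, g (k - 1 - i) := by
    rw [htrace, Finset.mul_sum]
    exact (norm_sum_le _ _).trans (Finset.sum_le_sum hterm)
  have hsum : ∑ i ∈ Finset.range k, g (k - 1 - i)
      = (t ^ (k - 1) - 1) / (t - 1) + 1 := by
    rw [Finset.sum_range_reflect]
    have hk1 : k = (k - 1) + 1 := by omega
    rw [hk1, Finset.sum_range_succ']
    have h1 : ∀ i, g (i + 1) = t ^ i := by intro i; simp [hgdef]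
    have h0 : g 0 = 1 := by simp [hgdef]
    rw [h0]
    rw [Finset.sum_congr rfl fun i _ => h1 i]
    rw [geom_sum_eq (by linarith : t ≠ 1)]
    norm_num
  have hS0 : (0:ℝ) ≤ (t ^ (k - 1) - 1) / (t - 1) + 1 := by
    have : (0:ℝ) ≤ (t ^ (k - 1) - 1) / (t - 1) := by
      apply div_nonneg _ (by linarith)
      nlinarith [one_le_pow₀ (a := t) hOtilInf.le (n := k-1)]
    linarith
  calc (1 / (D:ℝ)) * ‖((O * X) ^ k).trace - ((Otil * X) ^ k).trace‖
      ≤ (1 / (D:ℝ)) * (C * Real.sqrt D * ((t ^ (k - 1) - 1) / (t - 1) + 1)) := by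
        have h := habs
        rw [hsum] at h
        have hpos : (0:ℝ) < 1/(D:ℝ) := by positivity
        nlinarith [h, hpos]
    _ = C / Real.sqrt D * ((t ^ (k - 1) - 1) / (t - 1) + 1) := by
        set S := (t ^ (k - 1) - 1) / (t - 1) + 1 with hSdef
        rw [div_mul_eq_mul_div, div_mul_eq_mul_div, one_mul,
          div_eq_div_iff (ne_of_gt hDpos) (ne_of_gt hsDpos)]
        linear_combination (C * S) * hsD
end

section
/- Let $0 < \alpha < 1$, and suppose a Hermitian $D \times D$ operator $O$ with $\|O\|_2 = \sqrt{D}$ has operator Schmidt decomposition across some bipartition with squared Schmidt coefficients $\{\lambda_i^2\}_{i=1}^{r}$ (summing to 1) and Rényi operator entanglement $E^{(\alpha)} = \frac{1}{1-\alpha}\log\sum_i \lambda_i^{2\alpha}$. Then the rank-$\chi$ truncation error satisfies $\frac{1}{D}\|O - \tilde{O}_\chi\|_2^2 \leq \exp\left(\frac{1-\alpha}{\alpha}\left(E^{(\alpha)} - \log\frac{\chi}{1-\alpha}\right)\right)$, where $\tilde{O}_\chi$ keeps the $\chi$ largest Schmidt terms. -/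
open Matrix Finset
open scoped ComplexOrder

lemma frob_sq_sum {D r : ℕ} (M : Fin r → Matrix (Fin D) (Fin D) ℂ)
    (horth : ∀ i j, ((M i)ᴴ * M j).trace = if i = j then (D : ℂ) else 0)
    (lam : Fin r → ℝ) (t : Finset (Fin r)) :
    frob (∑ i ∈ t, (lam i : ℂ) • M i) ^ 2 = D * ∑ i ∈ t, lam i ^ 2 := by
  have htr : ((∑ i ∈ t, (lam i : ℂ) • M i)ᴴ * (∑ i ∈ t, (lam i : ℂ) • M i)).trace
      = ((D : ℂ) * ∑ i ∈ t, (lam i : ℂ) ^ 2) := by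
    rw [Matrix.conjTranspose_sum]
    simp only [Matrix.conjTranspose_smul, Finset.sum_mul, Finset.mul_sum,
      Matrix.smul_mul, Matrix.mul_smul, Matrix.trace_sum, Matrix.trace_smul, smul_smul,
      horth, smul_eq_mul, mul_ite, mul_zero, RCLike.star_def, Complex.conj_ofReal]
    refine Finset.sum_congr rfl fun i hi => ?_
    rw [Finset.sum_ite_eq' t i (fun j => (lam i : ℂ) * (lam j : ℂ) * (D:ℂ)), if_pos hi]
    ring
  have hre : ((∑ i ∈ t, (lam i : ℂ) • M i)ᴴ * (∑ i ∈ t, (lam i : ℂ) • M i)).trace.re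
      = (D : ℝ) * ∑ i ∈ t, lam i ^ 2 := by
    rw [htr]
    simp [Complex.ofReal_sum]
    left
    refine Finset.sum_congr rfl fun i _ => ?_
    rw [← Complex.ofReal_pow, Complex.ofReal_re]
  rw [frob, hre, Real.sq_sqrt (by positivity)]

/-- Rank-`χ` truncation error of an operator Schmidt decomposition, bounded by the
Rényi operator entanglement of order `α ∈ (0,1)`:
`D⁻¹‖O - Õ_χ‖₂² ≤ exp((1-α)/α (E^{(α)} - log(χ/(1-α))))`.
Here `M i` plays the role of the Hilbert–Schmidt orthonormal product operators
`Aᵢ ⊗ Bᵢ` of the bipartition, and `Õ_χ` keeps the `χ` largest Schmidt terms. -/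
theorem truncation_error_renyi_bound {D r : ℕ} (hD : 0 < D) (α : ℝ)
    (hα0 : 0 < α) (hα1 : α < 1)
    (M : Fin r → Matrix (Fin D) (Fin D) ℂ)
    (horth : ∀ i j, ((M i)ᴴ * M j).trace = if i = j then (D : ℂ) else 0)
    (lam : Fin r → ℝ) (hnn : ∀ i, 0 ≤ lam i)
    (hmono : ∀ i j : Fin r, i ≤ j → lam j ≤ lam i)
    (hsum : ∑ i : Fin r, lam i ^ 2 = 1)
    (O : Matrix (Fin D) (Fin D) ℂ) (hherm : O.IsHermitian)
    (hO : O = ∑ i : Fin r, (lam i : ℂ) • M i)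
    (hOnorm : frob O = Real.sqrt D)
    (χ : ℕ) (hχ1 : 1 ≤ χ) (hχr : χ < r) :
    (1 / D) * frob (O - ∑ i ∈ Finset.univ.filter (fun i : Fin r => i.val < χ),
        (lam i : ℂ) • M i) ^ 2 ≤
      Real.exp ((1 - α) / α *
        ((1 - α)⁻¹ * Real.log (∑ i : Fin r, lam i ^ (2 * α)) -
          Real.log ((χ : ℝ) / (1 - α)))) := by
  have hα1' : (0:ℝ) < 1 - α := by linarith
  have hχpos : (0:ℝ) < χ := by exact_mod_cast hχ1
  set s : Finset (Fin r) := Finset.univ.filter (fun i : Fin r => i.val < χ) with hs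
  set p : Fin r → ℝ := fun i => lam i ^ 2 with hp
  have hpnn : ∀ i, 0 ≤ p i := fun i => sq_nonneg _
  set S : ℝ := ∑ i : Fin r, lam i ^ (2 * α) with hS
  have hSalt : S = ∑ i : Fin r, p i ^ α := by
    refine Finset.sum_congr rfl fun i _ => ?_
    show lam i ^ (2 * α) = (lam i ^ 2) ^ α
    rw [← Real.rpow_natCast (lam i) 2, ← Real.rpow_mul (hnn i)]
    norm_num
  have hex : ∃ i, 0 < lam i := by
    by_contra h
    push_neg at h
    have hz : ∀ i, lam i = 0 := fun i => le_antisymm (h i) (hnn i)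
    simp [hp, hz] at hsum
  have hSpos : 0 < S := by
    obtain ⟨i, hi⟩ := hex
    rw [hSalt]
    refine Finset.sum_pos' (fun j _ => Real.rpow_nonneg (hpnn j) α) ⟨i, Finset.mem_univ i, ?_⟩
    exact Real.rpow_pos_of_pos (by positivity) α
  set k : Fin r := ⟨χ, hχr⟩ with hk
  set q : ℝ := p k with hq
  have hq0 : 0 ≤ q := hpnn k
  -- cardinality of the head
  have hcard : s.card = χ := by
    have hsk : s = Finset.Iio k := by
      ext i
      simp [hs, Finset.mem_Iio, Fin.lt_def, hk]
    rw [hsk, Fin.card_Iio]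
  -- head bound
  have hhead : (χ:ℝ) * q ^ α ≤ ∑ i ∈ s, p i ^ α := by
    have h1 : ∀ i ∈ s, q ^ α ≤ p i ^ α := by
      intro i hi
      refine Real.rpow_le_rpow hq0 ?_ hα0.le
      have hik : i ≤ k := by
        simp only [hs, Finset.mem_filter] at hi
        exact le_of_lt (by simpa [Fin.lt_def, hk] using hi.2)
      exact pow_le_pow_left₀ (hnn k) (hmono i k hik) 2
    have := Finset.card_nsmul_le_sum s (fun i => p i ^ α) (q ^ α) h1
    rw [hcard] at this
    simpa [nsmul_eq_mul] using this
  -- tail pointwise bound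
  have htailpt : ∀ i ∈ sᶜ, p i ≤ p i ^ α * q ^ (1 - α) := by
    intro i hi
    have hki : k ≤ i := by
      simp only [hs, Finset.mem_compl, Finset.mem_filter, Finset.mem_univ, true_and,
        not_lt] at hi
      exact hi
    have hpi : p i ≤ q := pow_le_pow_left₀ (hnn i) (hmono k i hki) 2
    have h1 : p i = p i ^ α * p i ^ (1 - α) := by
      rw [← Real.rpow_add' (hpnn i) (by norm_num : α + (1 - α) ≠ 0)]
      norm_num
    calc p i = p i ^ α * p i ^ (1 - α) := h1
      _ ≤ p i ^ α * q ^ (1 - α) :=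
        mul_le_mul_of_nonneg_left (Real.rpow_le_rpow (hpnn i) hpi hα1'.le)
          (Real.rpow_nonneg (hpnn i) α)
  set T : ℝ := ∑ i ∈ sᶜ, p i with hT
  have hTtail : T ≤ q ^ (1 - α) * ∑ i ∈ sᶜ, p i ^ α := by
    rw [Finset.mul_sum]
    refine Finset.sum_le_sum fun i hi => ?_
    rw [mul_comm]
    exact htailpt i hi
  have hStail : ∑ i ∈ sᶜ, p i ^ α ≤ S - χ * q ^ α := by
    have hsplit : S = (∑ i ∈ s, p i ^ α) + ∑ i ∈ sᶜ, p i ^ α := by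
      rw [hSalt, ← Finset.sum_add_sum_compl s]
    linarith
  have hqq : q ^ (1 - α) * q ^ α = q := by
    rw [← Real.rpow_add' hq0 (by norm_num : (1 - α) + α ≠ 0)]
    norm_num
  have hT1 : T ≤ q ^ (1 - α) * S - (χ:ℝ) * q := by
    calc T ≤ q ^ (1 - α) * ∑ i ∈ sᶜ, p i ^ α := hTtail
      _ ≤ q ^ (1 - α) * (S - χ * q ^ α) :=
          mul_le_mul_of_nonneg_left hStail (Real.rpow_nonneg hq0 _)
      _ = q ^ (1 - α) * S - (χ:ℝ) * (q ^ (1 - α) * q ^ α) := by ring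
      _ = q ^ (1 - α) * S - (χ:ℝ) * q := by rw [hqq]
  set T0 : ℝ := S ^ (α⁻¹) * ((1 - α) / χ) ^ ((1 - α) / α) with hT0def
  have hT0 : 0 ≤ T0 := by positivity
  -- AM-GM key step
  have hkey : q ^ (1 - α) * S ≤ (χ:ℝ) * q + α * T0 := by
    have h3 : ((χ:ℝ) / (1 - α)) ^ (1 - α) * ((1 - α) / χ) ^ (1 - α) = 1 := by
      rw [← Real.mul_rpow (by positivity) (by positivity),
        show ((χ:ℝ)/(1-α)) * ((1-α)/χ) = 1 by field_simp]
      exact Real.one_rpow _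
    have h2 : (q * ((χ:ℝ) / (1 - α))) ^ (1 - α) * T0 ^ α = q ^ (1 - α) * S := by
      rw [Real.mul_rpow hq0 (by positivity), hT0def,
        Real.mul_rpow (Real.rpow_nonneg hSpos.le _) (by positivity),
        ← Real.rpow_mul hSpos.le, inv_mul_cancel₀ (ne_of_gt hα0), Real.rpow_one,
        ← Real.rpow_mul (by positivity : (0:ℝ) ≤ (1-α)/χ), div_mul_cancel₀ _ (ne_of_gt hα0)]
      calc q ^ (1-α) * ((χ:ℝ)/(1-α)) ^ (1-α) * (S * ((1-α)/χ) ^ (1-α))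
          = q ^ (1-α) * S * (((χ:ℝ)/(1-α)) ^ (1-α) * ((1-α)/χ) ^ (1-α)) := by ring
        _ = q ^ (1-α) * S := by rw [h3, mul_one]
    calc q ^ (1-α) * S = (q * ((χ:ℝ)/(1-α))) ^ (1-α) * T0 ^ α := h2.symm
      _ ≤ (1-α) * (q * ((χ:ℝ)/(1-α))) + α * T0 :=
          Real.geom_mean_le_arith_mean2_weighted hα1'.le hα0.le
            (mul_nonneg hq0 (by positivity)) hT0 (by ring)
      _ = (χ:ℝ) * q + α * T0 := by field_simp
  have hTle : T ≤ T0 := by nlinarith [mul_nonneg hα1'.le hT0]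
  have hc1 : (0:ℝ) < (1 - α)/χ := by positivity
  have hRHS : Real.exp ((1 - α) / α *
      ((1 - α)⁻¹ * Real.log S - Real.log ((χ:ℝ) / (1 - α)))) = T0 := by
    rw [hT0def, Real.rpow_def_of_pos hSpos, Real.rpow_def_of_pos hc1, ← Real.exp_add]
    congr 1
    rw [show (1 - α)/(χ:ℝ) = ((χ:ℝ)/(1 - α))⁻¹ from (inv_div _ _).symm, Real.log_inv]
    field_simp
    ring
  have hdiff : O - ∑ i ∈ s, (lam i:ℂ) • M i = ∑ i ∈ sᶜ, (lam i:ℂ) • M i := by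
    rw [hO, ← Finset.sum_add_sum_compl s (fun i => (lam i:ℂ) • M i), add_sub_cancel_left]
  rw [hdiff, frob_sq_sum M horth lam sᶜ, hRHS]
  have hTeq : ∑ i ∈ sᶜ, lam i ^ 2 = T := by simp [hT, hp]
  rw [hTeq]
  have hDne : (D:ℝ) ≠ 0 := Nat.cast_ne_zero.mpr hD.ne'
  rw [one_div, inv_mul_cancel_left₀ hDne]
  exact hTle
end

section
/- Let $p_1 \geq \cdots \geq p_r \geq 0$ with $\sum_i p_i = 1$, let $\alpha > 1$, and let $\varepsilon \in [0,1)$. If the tail sum satisfies $\sum_{i=\chi+1}^{r} p_i \leq \varepsilon^2$, then $\log\chi \geq S^{(\alpha)} + \frac{\alpha}{\alpha-1}\log(1-\varepsilon^2)$, where $S^{(\alpha)} = \frac{1}{1-\alpha}\log\sum_i p_i^{\alpha}$. -/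
open Finset

/-- Bond-dimension lower bound from the `α > 1` Rényi tail bound: if the truncation
tail satisfies `∑_{i>χ} pᵢ ≤ ε²`, then `log χ ≥ S^{(α)} + (α/(α-1)) log(1-ε²)`. -/
theorem log_chi_ge_renyi_bound (r χ : ℕ) (p : ℕ → ℝ) (α ε : ℝ)
    (hα : 1 < α)
    (hnn : ∀ i, i < r → 0 ≤ p i)
    (hmono : ∀ i j, i ≤ j → j < r → p j ≤ p i)
    (hsum : ∑ i ∈ Finset.range r, p i = 1)
    (hχ1 : 1 ≤ χ) (hχr : χ < r)
    (hε0 : 0 ≤ ε) (hε1 : ε < 1)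
    (htail : ∑ i ∈ Finset.Ico χ r, p i ≤ ε ^ 2) :
    (1 - α)⁻¹ * Real.log (∑ i ∈ Finset.range r, p i ^ α) +
        α / (α - 1) * Real.log (1 - ε ^ 2) ≤ Real.log χ := by
  have hχ0 : (0:ℝ) < (χ:ℝ) := by exact_mod_cast hχ1
  have hε2 : (0:ℝ) < 1 - ε ^ 2 := by nlinarith
  -- head sum
  have hsplit : ∑ i ∈ Finset.range χ, p i + ∑ i ∈ Finset.Ico χ r, p i
      = ∑ i ∈ Finset.range r, p i := by
    rw [Finset.range_eq_Ico, Finset.range_eq_Ico]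
    exact Finset.sum_Ico_consecutive p (Nat.zero_le _) hχr.le
  have hhead : 1 - ε ^ 2 ≤ ∑ i ∈ Finset.range χ, p i := by
    have := hsplit; linarith [htail, hsum]
  have hnnχ : ∀ i ∈ Finset.range χ, 0 ≤ p i := fun i hi =>
    hnn i (lt_trans (Finset.mem_range.mp hi) hχr)
  -- Jensen: ((∑_{i<χ} p i)/χ)^α ≤ (1/χ) ∑_{i<χ} (p i)^α
  have hjensen :
      (∑ i ∈ Finset.range χ, ((χ:ℝ)⁻¹) * p i) ^ α
        ≤ ∑ i ∈ Finset.range χ, ((χ:ℝ)⁻¹) * p i ^ α := by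
    apply Real.rpow_arith_mean_le_arith_mean_rpow _ _ _
      (fun i _ => by positivity)
      (by rw [Finset.sum_const, Finset.card_range, nsmul_eq_mul]
          field_simp)
      hnnχ hα.le
  have hsum1 : ∑ i ∈ Finset.range χ, ((χ:ℝ)⁻¹) * p i
      = (χ:ℝ)⁻¹ * ∑ i ∈ Finset.range χ, p i := by rw [Finset.mul_sum]
  have hsum2 : ∑ i ∈ Finset.range χ, ((χ:ℝ)⁻¹) * p i ^ α
      = (χ:ℝ)⁻¹ * ∑ i ∈ Finset.range χ, p i ^ α := by rw [Finset.mul_sum]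
  -- lower bound on the Rényi sum
  have hSχ : ((χ:ℝ)⁻¹ * (1 - ε ^ 2)) ^ α * (χ:ℝ)
      ≤ ∑ i ∈ Finset.range χ, p i ^ α := by
    have h1 : ((χ:ℝ)⁻¹ * (1 - ε ^ 2)) ^ α
        ≤ ((χ:ℝ)⁻¹ * ∑ i ∈ Finset.range χ, p i) ^ α := by
      apply Real.rpow_le_rpow (by positivity)
      · exact mul_le_mul_of_nonneg_left hhead (by positivity)
      · linarith
    have h2 := hjensen
    rw [hsum1, hsum2] at h2
    have := le_trans h1 h2
    calc ((χ:ℝ)⁻¹ * (1 - ε ^ 2)) ^ α * (χ:ℝ)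
        ≤ ((χ:ℝ)⁻¹ * ∑ i ∈ Finset.range χ, p i ^ α) * (χ:ℝ) := by
          exact mul_le_mul_of_nonneg_right this hχ0.le
      _ = ∑ i ∈ Finset.range χ, p i ^ α := by field_simp
  have hS : ((χ:ℝ)⁻¹ * (1 - ε ^ 2)) ^ α * (χ:ℝ)
      ≤ ∑ i ∈ Finset.range r, p i ^ α := by
    refine le_trans hSχ (Finset.sum_le_sum_of_subset_of_nonneg ?_ ?_)
    · exact Finset.range_subset_range.mpr hχr.le
    · intro i hi _; exact Real.rpow_nonneg (hnn i (Finset.mem_range.mp hi)) α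
  have hlhs_pos : 0 < ((χ:ℝ)⁻¹ * (1 - ε ^ 2)) ^ α * (χ:ℝ) := by positivity
  have hSpos : 0 < ∑ i ∈ Finset.range r, p i ^ α := lt_of_lt_of_le hlhs_pos hS
  have hlog := Real.log_le_log hlhs_pos hS
  have hloglhs : Real.log (((χ:ℝ)⁻¹ * (1 - ε ^ 2)) ^ α * (χ:ℝ))
      = α * (-Real.log χ + Real.log (1 - ε ^ 2)) + Real.log χ := by
    rw [Real.log_mul (ne_of_gt (by positivity)) (ne_of_gt hχ0),
      Real.log_rpow (by positivity), Real.log_mul (ne_of_gt (by positivity)) (ne_of_gt hε2),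
      Real.log_inv]
  rw [hloglhs] at hlog
  -- rearrange
  have hα1 : (0:ℝ) < α - 1 := by linarith
  have hne : (1:ℝ) - α ≠ 0 := by linarith
  have h : α * Real.log (1 - ε ^ 2) - (α - 1) * Real.log χ
      ≤ Real.log (∑ i ∈ Finset.range r, p i ^ α) := by nlinarith [hlog]
  have hc : (1 - α)⁻¹ ≤ 0 := le_of_lt (inv_lt_zero.mpr (by linarith))
  have h2 := mul_le_mul_of_nonpos_left h hc
  have h3 : (1 - α)⁻¹ * (α * Real.log (1 - ε ^ 2) - (α - 1) * Real.log χ)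
      = -(α / (α - 1)) * Real.log (1 - ε ^ 2) + Real.log χ := by
    field_simp
    ring
  rw [h3] at h2
  linarith
end
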